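/- Every Â-colorable 4-regular graph is 2C₃-colorable, i.e., has an even cycle decomposition of size at most 3. -/

import Mathlib

/-- A loopless multigraph with vertex type `V` and edge type `E`. -/
structure Multigraph (V E : Type) where
  ends : E → Sym2 V
  loopless : ∀ e, ¬ (ends e).IsDiag

namespace Multigraph

variable {V E W F K L : Type}

/-- The set of edges incident with a vertex. -/
def edgesAt (G : Multigraph V E) (v : V) : Set E := {e | v ∈ G.ends e}

/-- The degree of a vertex: the number of incident edges. -/
noncomputable def deg (G : Multigraph V E) (v : V) : ℕ := (G.edgesAt v).ncard

/-- Two edges are adjacent if they are distinct and share an endpoint. -/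
def EdgeAdj (G : Multigraph V E) (e₁ e₂ : E) : Prop :=
  e₁ ≠ e₂ ∧ ∃ v, v ∈ G.ends e₁ ∧ v ∈ G.ends e₂

/-- A proper edge-coloring of `G` with colors in `C`: adjacent edges get
distinct colors. -/
def ProperEdgeColoring (G : Multigraph V E) {C : Type} (f : E → C) : Prop :=
  ∀ e₁ e₂, G.EdgeAdj e₁ e₂ → f e₁ ≠ f e₂

/-- `f` and `g` form an `H`-coloring of `G`: `f` is a proper edge-coloring and
`f(∂_G(u)) = ∂_H(g(u))` for every vertex `u`. -/
def IsHColoring (G : Multigraph V E) (H : Multigraph W F)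
    (f : E → F) (g : V → W) : Prop :=
  G.ProperEdgeColoring f ∧ ∀ u : V, f '' (G.edgesAt u) = H.edgesAt (g u)

/-- `G` is `H`-colorable. -/
def HColorable (G : Multigraph V E) (H : Multigraph W F) : Prop :=
  ∃ (f : E → F) (g : V → W), G.IsHColoring H f g

end Multigraph

/-- The graph `Â`: a triangle `0,1,2` with pendant edges `0-3` and `1-4`, and
two further edges between the (formerly) degree-two vertex `2` and its two
neighbours `0` and `1` on the triangle. -/
def AHat : Multigraph (Fin 5) (Fin 7) where
  ends := ![s(0,1), s(0,2), s(1,2), s(0,3), s(1,4), s(2,0), s(2,1)]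
  loopless := by decide

namespace Multigraph
variable {V E : Type}

/-- The vertices covered by a set of edges. -/
def vertsOf (G : Multigraph V E) (S : Set E) : Set V := {v | ∃ e ∈ S, v ∈ G.ends e}

/-- A set of edges forms a cycle: it is nonempty, every covered vertex lies on
exactly two of its edges, and it is connected. -/
def IsCycleSet (G : Multigraph V E) (S : Set E) : Prop :=
  S.Nonempty ∧ (∀ v ∈ G.vertsOf S, {e ∈ S | v ∈ G.ends e}.ncard = 2) ∧
  ∀ u ∈ G.vertsOf S, ∀ v ∈ G.vertsOf S,
    Relation.ReflTransGen (fun a b => ∃ e ∈ S, a ∈ G.ends e ∧ b ∈ G.ends e) u v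

/-- `G` has an even cycle decomposition of size at most 3: a partition of its
edge set into even cycles, which can be colored with 3 colors so that cycles of
the same color are vertex-disjoint. -/
def HasEvenCycleDecompSize3 (G : Multigraph V E) : Prop :=
  ∃ P : Set (Set E), (∀ e : E, ∃! S, S ∈ P ∧ e ∈ S) ∧
    (∀ S ∈ P, G.IsCycleSet S ∧ Even S.ncard) ∧
    ∃ c : Set E → Fin 3, ∀ S ∈ P, ∀ T ∈ P, S ≠ T → c S = c T →
      Disjoint (G.vertsOf S) (G.vertsOf T)

end Multigraph

/-!
The seven edges of `Â` fall into three classes: `{01, 03, 14}`, the two edges joining `0` and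
`2`, and the two edges joining `1` and `2`. Each degree-four vertex `0, 1, 2` of `Â` meets every
class it meets in exactly two edges, one of them on the triangle and one not. An `Â`-coloring of
a 4-regular graph sends every vertex to a degree-four vertex of `Â`, so pulling this structure
back, each class induces a 2-regular subgraph whose edges alternate between triangle and
non-triangle colors. Its components are therefore even cycles, and components of the same class
are vertex-disjoint, so coloring each cycle by its class gives an even cycle decomposition of
size 3.
-/

open Relation

theorem Set.ncard_mul_eq_ncard_mul {α β : Type} {s : Set α} {t : Set β} (hs : s.Finite)
    (ht : t.Finite) (r : α → β → Prop) {m n : ℕ}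
    (hm : ∀ a ∈ s, {b ∈ t | r a b}.ncard = m)
    (hn : ∀ b ∈ t, {a ∈ s | r a b}.ncard = n) :
    s.ncard * m = t.ncard * n := by
  classical
  lift s to Finset α using hs
  lift t to Finset β using ht
  simp only [Set.ncard_coe_finset, Finset.mem_coe] at hm hn ⊢
  refine Finset.card_mul_eq_card_mul r (fun a ha => ?_) (fun b hb => ?_)
  · rw [← hm a ha, ← Set.ncard_coe_finset, Finset.coe_bipartiteAbove]
  · rw [← hn b hb, ← Set.ncard_coe_finset, Finset.coe_bipartiteBelow]

theorem Set.ncard_eq_ncard_sep_add_ncard_sep {α : Type} (s : Set α) (p : α → Bool)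
    (htrue : {x ∈ s | p x = true}.Finite) (hfalse : {x ∈ s | p x = false}.Finite) :
    s.ncard = {x ∈ s | p x = true}.ncard + {x ∈ s | p x = false}.ncard := by
  rw [← Set.ncard_union_eq _ htrue hfalse]
  · congr 1
    ext x
    cases hx : p x <;> simp [hx]
  · exact Set.disjoint_left.2 fun x h₁ h₂ => by simp_all

namespace Multigraph

variable {V E W F ι : Type} (G : Multigraph V E)

theorem ncard_setOf_mem_ends (e : E) : {u | u ∈ G.ends e}.ncard = 2 := by
  have hloop := G.loopless e
  revert hloop
  induction G.ends e using Sym2.ind with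
  | _ a b =>
    intro hab
    have hpair : {u | u ∈ s(a, b)} = {a, b} := by ext; simp
    rw [hpair, Set.ncard_pair (by simpa using hab)]

theorem vertsOf_finite {S : Set E} (hS : S.Finite) : (G.vertsOf S).Finite := by
  refine (hS.biUnion fun e _ => Set.finite_of_ncard_ne_zero (s := {u | u ∈ G.ends e}) ?_).subset
    fun u ⟨e, he, hu⟩ => Set.mem_biUnion he hu
  rw [ncard_setOf_mem_ends]
  exact two_ne_zero

theorem nonempty_of_mem_vertsOf {S : Set E} {v : V} (hv : v ∈ G.vertsOf S) : S.Nonempty :=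
  let ⟨e, he, _⟩ := hv
  ⟨e, he⟩

/-- Around `v`, every class of `c` is either absent or a pair of edges on opposite sides of `t`,
so that each class is 2-regular and alternates between the sides. -/
def IsAlternatingAt (c : E → ι) (t : E → Bool) (v : V) : Prop :=
  ∀ i, (∃ e ∈ G.edgesAt v, c e = i) → ∀ b, {e ∈ G.edgesAt v | c e = i ∧ t e = b}.ncard = 1

section HColoring

variable {G} {H : Multigraph W F} {f : E → F} {g : V → W}

theorem ncard_sep_edgesAt_eq (hfg : G.IsHColoring H f g) (v : V) (p : F → Prop) :
    {e ∈ G.edgesAt v | p (f e)}.ncard = {k ∈ H.edgesAt (g v) | p k}.ncard := by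
  have hinj : (G.edgesAt v).InjOn f := fun e₁ h₁ e₂ h₂ hf =>
    by_contra fun hne => hfg.1 e₁ e₂ ⟨hne, v, h₁, h₂⟩ hf
  calc {e ∈ G.edgesAt v | p (f e)}.ncard
      = (f '' (G.edgesAt v ∩ f ⁻¹' {k | p k})).ncard :=
        ((hinj.mono Set.inter_subset_left).ncard_image).symm
    _ = {k ∈ H.edgesAt (g v) | p k}.ncard := by rw [Set.image_inter_preimage, hfg.2 v]; rfl

theorem deg_eq_of_isHColoring (hfg : G.IsHColoring H f g) (v : V) : H.deg (g v) = G.deg v := by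
  simpa [deg] using (ncard_sep_edgesAt_eq hfg v fun _ => True).symm

theorem isAlternatingAt_comp {c : F → ι} {t : F → Bool} (hfg : G.IsHColoring H f g) {v : V}
    (h : H.IsAlternatingAt c t (g v)) : G.IsAlternatingAt (c ∘ f) (t ∘ f) v := by
  rintro i ⟨e, he, rfl⟩ b
  exact (ncard_sep_edgesAt_eq hfg v fun k => c k = c (f e) ∧ t k = b).trans
    (h _ ⟨f e, hfg.2 v ▸ ⟨e, he, rfl⟩, rfl⟩ b)

end HColoring

section ClassComponent

variable (c : E → ι) (i : ι)

def ClassAdj (a b : V) : Prop := ∃ e, c e = i ∧ a ∈ G.ends e ∧ b ∈ G.ends e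

instance : Std.Symm (G.ClassAdj c i) := ⟨fun _ _ ⟨e, he, ha, hb⟩ => ⟨e, he, hb, ha⟩⟩

def classComponent (v : V) : Set E :=
  {e | c e = i ∧ ∃ a ∈ G.ends e, ReflTransGen (G.ClassAdj c i) v a}

variable {G c i} {t : E → Bool} {u v w : V}

theorem reflTransGen_of_mem_vertsOf (hu : u ∈ G.vertsOf (G.classComponent c i v)) :
    ReflTransGen (G.ClassAdj c i) v u := by
  obtain ⟨e, ⟨hi, a, ha, hva⟩, hu⟩ := hu
  exact hva.tail ⟨e, hi, ha, hu⟩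

theorem classComponent_eq (h : ReflTransGen (G.ClassAdj c i) v w) :
    G.classComponent c i v = G.classComponent c i w := by
  ext e
  exact and_congr_right fun _ => exists_congr fun _ => and_congr_right fun _ =>
    ⟨(symm h).trans, h.trans⟩

theorem sep_classComponent_mem_ends (hu : u ∈ G.vertsOf (G.classComponent c i v)) :
    {e ∈ G.classComponent c i v | u ∈ G.ends e} = {e ∈ G.edgesAt u | c e = i} := by
  ext e
  constructor
  · rintro ⟨⟨hi, -⟩, hue⟩
    exact ⟨hue, hi⟩
  · rintro ⟨hue, hi⟩
    exact ⟨⟨hi, u, hue, reflTransGen_of_mem_vertsOf hu⟩, hue⟩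

theorem reflTransGen_within_classComponent {a b : V} (hva : ReflTransGen (G.ClassAdj c i) v a)
    (hab : ReflTransGen (G.ClassAdj c i) a b) :
    ReflTransGen (fun x y => ∃ e ∈ G.classComponent c i v, x ∈ G.ends e ∧ y ∈ G.ends e) a b := by
  induction hab with
  | refl => exact ReflTransGen.refl
  | tail hac hcd ih =>
    obtain ⟨e, hi, hc, hd⟩ := hcd
    exact ih.tail ⟨e, ⟨hi, _, hc, hva.trans hac⟩, hc, hd⟩

theorem ncard_sep_edgesAt_eq_two (h : G.IsAlternatingAt c t u)
    (hi : ∃ e ∈ G.edgesAt u, c e = i) :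
    {e ∈ G.edgesAt u | c e = i}.ncard = 2 := by
  have hside (b : Bool) : {e ∈ {e ∈ G.edgesAt u | c e = i} | t e = b}.ncard = 1 := by
    simpa only [Set.sep_ofPred, Set.mem_ofPred_eq, and_assoc] using h i hi b
  have hfin (b : Bool) : {e ∈ {e ∈ G.edgesAt u | c e = i} | t e = b}.Finite :=
    Set.finite_of_ncard_ne_zero (by rw [hside]; exact one_ne_zero)
  rw [Set.ncard_eq_ncard_sep_add_ncard_sep _ t (hfin true) (hfin false), hside, hside]

theorem isCycleSet_classComponent (h : ∀ u, G.IsAlternatingAt c t u)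
    (hv : v ∈ G.vertsOf (G.classComponent c i v)) : G.IsCycleSet (G.classComponent c i v) := by
  refine ⟨?_, fun u hu => ?_, fun u hu w hw => ?_⟩
  · exact G.nonempty_of_mem_vertsOf hv
  · rw [sep_classComponent_mem_ends hu]
    obtain ⟨e, he, hue⟩ := hu
    exact ncard_sep_edgesAt_eq_two (h u) ⟨e, hue, he.1⟩
  · have hvu := reflTransGen_of_mem_vertsOf hu
    exact reflTransGen_within_classComponent hvu
      ((symm hvu).trans (reflTransGen_of_mem_vertsOf hw))

/-- Each vertex of the component lies on one edge of each side and each edge has two ends, so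
both sides have half as many edges as the component has vertices. -/
theorem even_ncard_classComponent (h : ∀ u, G.IsAlternatingAt c t u) :
    Even (G.classComponent c i v).ncard := by
  set S := G.classComponent c i v
  by_cases hS : S.Finite
  swap
  · simp [Set.Infinite.ncard hS]
  have hside (b : Bool) : (G.vertsOf S).ncard * 1 = {e ∈ S | t e = b}.ncard * 2 := by
    refine Set.ncard_mul_eq_ncard_mul (G.vertsOf_finite hS) (hS.subset fun e he => he.1)
      (fun u e => u ∈ G.ends e) (fun u hu => ?_) (fun e he => ?_)
    · have hsep : {e ∈ {e ∈ S | t e = b} | u ∈ G.ends e}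
          = {e ∈ G.edgesAt u | c e = i ∧ t e = b} := by
        ext e
        have hmem := Set.ext_iff.1 (sep_classComponent_mem_ends hu) e
        exact ⟨fun ⟨⟨heS, hb⟩, hue⟩ => ⟨hue, (hmem.1 ⟨heS, hue⟩).2, hb⟩,
          fun ⟨hue, hi, hb⟩ => ⟨⟨(hmem.2 ⟨hue, hi⟩).1, hb⟩, hue⟩⟩
      obtain ⟨e, he, hue⟩ := hu
      rw [hsep]
      exact h u i ⟨e, hue, he.1⟩ b
    · have hends : {u ∈ G.vertsOf S | u ∈ G.ends e} = {u | u ∈ G.ends e} :=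
        Set.ext fun u => ⟨fun hu => hu.2, fun hu => ⟨⟨e, he.1, hu⟩, hu⟩⟩
      rw [hends, ncard_setOf_mem_ends]
  rw [Set.ncard_eq_ncard_sep_add_ncard_sep S t (hS.subset fun e he => he.1)
    (hS.subset fun e he => he.1)]
  have := (hside true).symm.trans (hside false)
  exact ⟨{e ∈ S | t e = true}.ncard, by omega⟩

theorem hasEvenCycleDecompSize3_of_isAlternatingAt (c : E → Fin 3) (t : E → Bool)
    (h : ∀ u, G.IsAlternatingAt c t u) : G.HasEvenCycleDecompSize3 := by
  classical
  refine ⟨{S | ∃ i v, v ∈ G.vertsOf (G.classComponent c i v) ∧ S = G.classComponent c i v},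
    fun e => ?_, ?_, fun S => if hS : S.Nonempty then c hS.some else 0, ?_⟩
  · obtain ⟨a, ha⟩ : ∃ a, a ∈ G.ends e := ⟨_, Sym2.out_fst_mem _⟩
    have he : e ∈ G.classComponent c (c e) a := ⟨rfl, a, ha, .refl⟩
    refine ⟨_, ⟨⟨c e, a, ⟨e, he, ha⟩, rfl⟩, he⟩, ?_⟩
    rintro S ⟨⟨i, v, -, rfl⟩, heS⟩
    obtain rfl : c e = i := heS.1
    exact classComponent_eq (reflTransGen_of_mem_vertsOf ⟨e, heS, ha⟩)
  · rintro S ⟨i, v, hv, rfl⟩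
    exact ⟨isCycleSet_classComponent h hv, even_ncard_classComponent h⟩
  · rintro S ⟨i, v, hv, rfl⟩ T ⟨j, w, hw, rfl⟩ hne hcol
    have hS := G.nonempty_of_mem_vertsOf hv
    have hT := G.nonempty_of_mem_vertsOf hw
    obtain rfl : i = j := by
      dsimp only at hcol
      rwa [dif_pos hS, dif_pos hT, hS.some_mem.1, hT.some_mem.1] at hcol
    exact Set.disjoint_left.2 fun u hu hu' => hne <| classComponent_eq <|
      (reflTransGen_of_mem_vertsOf hu).trans (symm (reflTransGen_of_mem_vertsOf hu'))

end ClassComponent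

end Multigraph

namespace AHat

open Multigraph

def edgeClass : Fin 7 → Fin 3 := ![0, 1, 2, 0, 0, 1, 2]

def isTriangleEdge (k : Fin 7) : Bool := k < 3

theorem isAlternatingAt_of_deg_eq_four {w : Fin 5} (hw : AHat.deg w = 4) :
    AHat.IsAlternatingAt edgeClass isTriangleEdge w := by
  simp only [IsAlternatingAt, deg, edgesAt, Set.ncard_eq_toFinset_card',
    Set.toFinset_ofPred] at hw ⊢
  revert w
  decide

end AHat

/-- Every `Â`-colorable 4-regular graph has an even cycle decomposition of
size at most 3 (equivalently, is `2C₃`-colorable). -/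
theorem evenCycleDecomp_of_ahatColorable {V E : Type} (G : Multigraph V E)
    (hreg : ∀ v : V, G.deg v = 4) (hcol : G.HColorable AHat) :
    G.HasEvenCycleDecompSize3 := by
  obtain ⟨f, g, hfg⟩ := hcol
  refine G.hasEvenCycleDecompSize3_of_isAlternatingAt _ _ fun v =>
    Multigraph.isAlternatingAt_comp hfg (AHat.isAlternatingAt_of_deg_eq_four ?_)
  exact (Multigraph.deg_eq_of_isHColoring hfg v).trans (hreg v)
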